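/- arXiv:1807.03987 — 4 statements merged into one kernel-verified Lean document; each statement's English description precedes it below -/
import Mathlib

section
/- For any odd positive integer n, the sum over k from 0 to n of (1/2)_k * (-n)_k * (n+1)_k / ((1)_k)^3 equals 0. -/
/-- The Pochhammer symbol (rising factorial): `(a)_k = a(a+1)⋯(a+k-1)`. -/
def poch {R : Type*} [CommRing R] (a : R) (k : ℕ) : R :=
  ∏ i ∈ Finset.range k, (a + i)

lemma poch_succ {R : Type*} [CommRing R] (a : R) (k : ℕ) :
    poch a (k + 1) = poch a k * (a + k) := Finset.prod_range_succ _ _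

lemma poch_succ_left {R : Type*} [CommRing R] (a : R) (k : ℕ) :
    poch a (k + 1) = a * poch (a + 1) k := by
  unfold poch
  rw [Finset.prod_range_succ']
  simp only [Nat.cast_zero, add_zero, Nat.cast_add, Nat.cast_one]
  rw [mul_comm]
  congr 1
  exact Finset.prod_congr rfl (fun i _ => by ring)

lemma poch_one_pos (k : ℕ) : 0 < poch (1 : ℚ) k := by
  unfold poch
  apply Finset.prod_pos
  intro i _
  positivity

lemma poch_one_ne (k : ℕ) : poch (1 : ℚ) k ≠ 0 := (poch_one_pos k).ne'

lemma poch_neg_nat_zero (m k : ℕ) (h : m < k) : poch (-(m : ℚ)) k = 0 := by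
  unfold poch
  apply Finset.prod_eq_zero (Finset.mem_range.mpr h)
  simp

/-- The summand. -/
noncomputable def Tt (n k : ℕ) : ℚ :=
  poch (1/2 : ℚ) k * poch (-(n : ℚ)) k * poch ((n : ℚ) + 1) k / (poch (1 : ℚ) k) ^ 3

/-- The WZ certificate function. -/
noncomputable def Gg (n k : ℕ) : ℚ :=
  (4 * (n : ℚ) + 6) / (((n : ℚ) + 1) * ((n : ℚ) + 2)) * (k : ℚ) ^ 3 *
    poch (1/2 : ℚ) k * poch (-(n : ℚ) - 2) k * poch ((n : ℚ) + 1) k / (poch (1 : ℚ) k) ^ 3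

lemma relB (n k : ℕ) :
    (((n : ℚ) + 1) * ((n : ℚ) + 2)) * poch (-(n : ℚ)) k =
      poch (-(n : ℚ) - 2) k * ((k : ℚ) - n - 2) * ((k : ℚ) - n - 1) := by
  have e1 : poch (-(n : ℚ) - 2) (k + 2)
      = poch (-(n : ℚ) - 2) k * ((k : ℚ) - n - 2) * ((k : ℚ) - n - 1) := by
    rw [show k + 2 = (k + 1) + 1 from rfl, poch_succ, poch_succ]
    push_cast; ring
  have e2 : poch (-(n : ℚ) - 2) (k + 2)
      = (((n : ℚ) + 1) * ((n : ℚ) + 2)) * poch (-(n : ℚ)) k := by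
    rw [show k + 2 = (k + 1) + 1 from rfl, poch_succ_left, poch_succ_left,
      show (-(n : ℚ) - 2 + 1 + 1) = -(n : ℚ) from by ring]
    ring
  rw [← e1, e2]

lemma relC (n k : ℕ) :
    (((n : ℚ) + 1) * ((n : ℚ) + 2)) * poch ((n : ℚ) + 3) k =
      poch ((n : ℚ) + 1) k * ((n : ℚ) + 1 + k) * ((n : ℚ) + 2 + k) := by
  have e1 : poch ((n : ℚ) + 1) (k + 2)
      = poch ((n : ℚ) + 1) k * ((n : ℚ) + 1 + k) * ((n : ℚ) + 2 + k) := by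
    rw [show k + 2 = (k + 1) + 1 from rfl, poch_succ, poch_succ]
    push_cast; ring
  have e2 : poch ((n : ℚ) + 1) (k + 2)
      = (((n : ℚ) + 1) * ((n : ℚ) + 2)) * poch ((n : ℚ) + 3) k := by
    rw [show k + 2 = (k + 1) + 1 from rfl, poch_succ_left, poch_succ_left,
      show ((n : ℚ) + 1 + 1 + 1) = (n : ℚ) + 3 from by ring]
    ring
  rw [← e1, e2]

lemma key (n k : ℕ) :
    ((n : ℚ) + 1) ^ 2 * Tt n k - ((n : ℚ) + 2) ^ 2 * Tt (n + 2) k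
      = Gg n (k + 1) - Gg n k := by
  have hF := poch_one_ne k
  have hn1 : ((n : ℚ) + 1) ≠ 0 := by positivity
  have hn2 : ((n : ℚ) + 2) ≠ 0 := by positivity
  have hk1 : ((k : ℚ) + 1) ≠ 0 := by positivity
  have hBval : poch (-(n : ℚ)) k =
      poch (-(n : ℚ) - 2) k * ((k : ℚ) - n - 2) * ((k : ℚ) - n - 1)
        / (((n : ℚ) + 1) * ((n : ℚ) + 2)) := by
    field_simp
    linear_combination relB n k
  have hCval : poch ((n : ℚ) + 3) k =
      poch ((n : ℚ) + 1) k * ((n : ℚ) + 1 + k) * ((n : ℚ) + 2 + k)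
        / (((n : ℚ) + 1) * ((n : ℚ) + 2)) := by
    field_simp
    linear_combination relC n k
  unfold Tt Gg
  rw [poch_succ (1/2 : ℚ) k, poch_succ (-(n : ℚ) - 2) k, poch_succ ((n : ℚ) + 1) k,
    poch_succ (1 : ℚ) k]
  push_cast
  rw [show (-((n : ℚ) + 2)) = -(n : ℚ) - 2 from by ring,
    show ((n : ℚ) + 2 + 1) = (n : ℚ) + 3 from by ring]
  rw [hBval, hCval]
  field_simp
  ring

noncomputable def SS (n : ℕ) : ℚ := ∑ k ∈ Finset.range (n + 1), Tt n k

lemma sum_ext (n : ℕ) : ∑ k ∈ Finset.range (n + 3), Tt n k = SS n := by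
  unfold SS
  symm
  apply Finset.sum_subset
  · exact Finset.range_subset_range.mpr (by omega)
  · intro k _ hk
    have hlt : n < k := by
      simp only [Finset.mem_range, not_lt] at hk
      omega
    unfold Tt
    rw [poch_neg_nat_zero n k hlt]
    ring

lemma Gg_zero (n : ℕ) : Gg n 0 = 0 := by
  unfold Gg
  norm_num

lemma Gg_top (n : ℕ) : Gg n (n + 3) = 0 := by
  unfold Gg
  rw [show (-(n : ℚ) - 2) = -(((n + 2 : ℕ) : ℚ)) from by push_cast; ring,
    poch_neg_nat_zero (n + 2) (n + 3) (by omega)]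
  ring

lemma step (n : ℕ) (h : SS n = 0) : SS (n + 2) = 0 := by
  have tel : ((n : ℚ) + 1) ^ 2 * (∑ k ∈ Finset.range (n + 3), Tt n k)
      - ((n : ℚ) + 2) ^ 2 * (∑ k ∈ Finset.range (n + 3), Tt (n + 2) k)
      = Gg n (n + 3) - Gg n 0 := by
    rw [← Finset.sum_range_sub (fun k => Gg n k) (n + 3), Finset.mul_sum, Finset.mul_sum,
      ← Finset.sum_sub_distrib]
    exact Finset.sum_congr rfl (fun k _ => key n k)
  rw [Gg_zero, Gg_top, sum_ext, show n + 3 = (n + 2) + 1 from rfl] at tel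
  have hn2 : ((n : ℚ) + 2) ≠ 0 := by positivity
  have : ((n : ℚ) + 2) ^ 2 * SS (n + 2) = 0 := by
    unfold SS
    rw [h] at tel
    linarith [tel]
  exact (mul_eq_zero.mp this).resolve_left (pow_ne_zero 2 hn2)

lemma SS_one : SS 1 = 0 := by
  unfold SS Tt
  rw [Finset.sum_range_succ, Finset.sum_range_succ, Finset.sum_range_zero]
  unfold poch
  norm_num [Finset.prod_range_succ]

lemma SS_odd (m : ℕ) : SS (2 * m + 1) = 0 := by
  induction m with
  | zero => exact SS_one
  | succ m ih =>
    have : 2 * (m + 1) + 1 = (2 * m + 1) + 2 := by omega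
    rw [this]
    exact step _ ih

theorem stmt2 (n : ℕ) (hn : Odd n) (hpos : 0 < n) :
    ∑ k ∈ Finset.range (n + 1),
      (poch (1/2 : ℚ) k * poch (-(n : ℚ)) k * poch ((n : ℚ) + 1) k /
        (poch (1 : ℚ) k) ^ 3) = 0 := by
  obtain ⟨m, hm⟩ := hn
  have : n = 2 * m + 1 := by omega
  subst this
  exact SS_odd m
end

section
/- For any prime p with p ≡ 3 (mod 4) and p ≥ 5, the sum J = sum over k from 0 to (p-3)/4 of C(2k,k)^2/16^k satisfies 2J ≡ -1 (mod p), i.e., J ≡ -1/2 (mod p) as an element of Z_p or after clearing denominators. -/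
lemma aux_choose_sub_one (p : ℕ) (hp : p.Prime) :
    ∀ k, k ≤ p - 1 → (((p-1).choose k : ZMod p) = (-1)^k) := by
  intro k
  induction k with
  | zero => simp
  | succ k ih =>
    intro hk
    have hp2 := hp.two_le
    have hk' : k ≤ p - 1 := by omega
    have hd : (p : ℕ) ∣ p.choose (k+1) :=
      hp.dvd_choose_self (Nat.succ_ne_zero k) (by omega)
    have h0 : ((p.choose (k+1) : ℕ) : ZMod p) = 0 :=
      (ZMod.natCast_eq_zero_iff _ _).mpr hd
    have h2 : p.choose (k+1) = (p-1).choose k + (p-1).choose (k+1) := by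
      conv_lhs => rw [show p = (p-1)+1 by omega]
      rw [Nat.choose_succ_succ]
    rw [h2] at h0
    push_cast at h0
    have ihk := ih hk'
    rw [pow_succ]
    linear_combination h0 - ihk

lemma aux_central (p : ℕ) (hp : p.Prime) (m : ℕ) (hm : 2*m + 1 = p) :
    ∀ k, k ≤ m → (((2*k).choose k : ZMod p) = (-4)^k * (m.choose k : ZMod p)) := by
  haveI : Fact p.Prime := ⟨hp⟩
  intro k
  induction k with
  | zero => simp
  | succ k ih =>
    intro hk
    have hk' : k ≤ m := by omega
    have ihk := ih hk'
    have hcb := Nat.succ_mul_centralBinom_succ k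
    simp only [Nat.centralBinom_eq_two_mul_choose] at hcb
    have hcbZ : ((k:ZMod p)+1) * ((2*(k+1)).choose (k+1) : ZMod p)
        = 2*(2*(k:ZMod p)+1) * ((2*k).choose k : ZMod p) := by
      have := congrArg (Nat.cast : ℕ → ZMod p) hcb
      push_cast at this
      linear_combination this
    have hch := Nat.choose_succ_right_eq m k
    have hchZ : (m.choose (k+1) : ZMod p) * ((k:ZMod p)+1)
        = (m.choose k : ZMod p) * ((m:ZMod p) - (k:ZMod p)) := by
      have := congrArg (Nat.cast : ℕ → ZMod p) hch
      push_cast [Nat.cast_sub hk'] at this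
      linear_combination this
    have hmp : 2*(m:ZMod p) = -1 := by
      have : ((2*m+1 : ℕ) : ZMod p) = 0 := by rw [hm]; exact ZMod.natCast_self p
      push_cast at this
      linear_combination this
    have hne : ((k:ZMod p) + 1) ≠ 0 := by
      have h1 : ((k+1 : ℕ) : ZMod p) ≠ 0 := by
        rw [Ne, ZMod.natCast_eq_zero_iff]
        intro hdvd
        have := Nat.le_of_dvd (k.succ_pos) hdvd
        omega
      push_cast at h1
      exact h1
    apply mul_left_cancel₀ hne
    push_cast
    linear_combination hcbZ + 2*(2*(k:ZMod p)+1)*ihk - (-4:ZMod p)^(k+1)*hchZ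
      + 2*(-4:ZMod p)^k*((m.choose k : ZMod p))*hmp

lemma aux_half_sum (q : ℕ) :
    ∑ k ∈ Finset.range (2*q+2), ((2*q+1).choose k)^2
      = 2 * ∑ k ∈ Finset.range (q+1), ((2*q+1).choose k)^2 := by
  have hsplit : ∑ k ∈ Finset.range ((q+1)+(q+1)), ((2*q+1).choose k)^2
      = (∑ k ∈ Finset.range (q+1), ((2*q+1).choose k)^2)
        + ∑ k ∈ Finset.range (q+1), ((2*q+1).choose ((q+1)+k))^2 := by
    rw [Finset.sum_range_add]
  have h2 : ∑ k ∈ Finset.range (q+1), ((2*q+1).choose ((q+1)+k))^2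
      = ∑ k ∈ Finset.range (q+1), ((2*q+1).choose k)^2 := by
    have hrefl := Finset.sum_range_reflect (fun k => ((2*q+1).choose k)^2) (q+1)
    rw [← hrefl]
    apply Finset.sum_congr rfl
    intro k hk
    simp only [Finset.mem_range] at hk
    have hle : (q+1)+k ≤ 2*q+1 := by omega
    rw [show q+1-1-k = (2*q+1) - ((q+1)+k) by omega, Nat.choose_symm hle]
  rw [show 2*q+2 = (q+1)+(q+1) by ring, hsplit, h2]
  ring

lemma aux_vandermonde (m : ℕ) :
    ∑ k ∈ Finset.range (m+1), (m.choose k)^2 = (2*m).choose m := by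
  rw [two_mul, Nat.add_choose_eq, Finset.Nat.sum_antidiagonal_eq_sum_range_succ_mk]
  apply Finset.sum_congr rfl
  intro k hk
  simp only [Finset.mem_range] at hk
  rw [Nat.choose_symm (by omega), sq]

theorem stmt5 (p : ℕ) (hp : p.Prime) (h4 : p % 4 = 3) (hp5 : 5 ≤ p) :
    (2 : ZMod p) * ∑ k ∈ Finset.range ((p - 3) / 4 + 1),
      (Nat.choose (2 * k) k : ZMod p) ^ 2 * ((16 : ZMod p)⁻¹) ^ k = -1 := by
  haveI : Fact p.Prime := ⟨hp⟩
  obtain ⟨q, hq⟩ : ∃ q, p = 4*q+3 := ⟨p/4, by omega⟩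
  have hn : (p-3)/4 = q := by omega
  set m := 2*q+1 with hm
  have hmp : 2*m+1 = p := by omega
  have h16 : (16 : ZMod p) ≠ 0 := by
    have : ((16:ℕ) : ZMod p) ≠ 0 := by
      rw [Ne, ZMod.natCast_eq_zero_iff]
      intro hdvd
      have h24 : (p:ℕ) ∣ 2^4 := by norm_num at hdvd ⊢; exact hdvd
      have := hp.dvd_of_dvd_pow h24
      have := Nat.le_of_dvd (by norm_num) this
      omega
    push_cast at this
    exact this
  have hterm : ∀ k ∈ Finset.range (q+1),
      (Nat.choose (2*k) k : ZMod p) ^ 2 * ((16 : ZMod p)⁻¹) ^ k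
        = ((m.choose k : ZMod p))^2 := by
    intro k hk
    simp only [Finset.mem_range] at hk
    rw [aux_central p hp m hmp k (by omega)]
    have h16k : ((-4:ZMod p)^k)^2 * ((16 : ZMod p)⁻¹) ^ k = 1 := by
      rw [← pow_mul, mul_comm k 2, pow_mul, show ((-4:ZMod p))^2 = 16 by norm_num,
        ← mul_pow, mul_inv_cancel₀ h16, one_pow]
    calc ((-4:ZMod p)^k * (m.choose k : ZMod p))^2 * ((16 : ZMod p)⁻¹) ^ k
        = ((m.choose k : ZMod p))^2 * (((-4:ZMod p)^k)^2 * ((16 : ZMod p)⁻¹) ^ k) := by ring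
      _ = ((m.choose k : ZMod p))^2 := by rw [h16k, mul_one]
  rw [hn, Finset.sum_congr rfl hterm]
  have hnat : ∑ k ∈ Finset.range (q+1), ((m.choose k : ZMod p))^2
      = ((∑ k ∈ Finset.range (q+1), (m.choose k)^2 : ℕ) : ZMod p) := by
    push_cast; ring
  rw [hnat, show (2 : ZMod p) = ((2:ℕ) : ZMod p) by norm_cast, ← Nat.cast_mul,
    ← aux_half_sum q, show 2*q+2 = m+1 by omega, aux_vandermonde m]
  have h2m : 2*m = p - 1 := by omega
  rw [h2m, aux_choose_sub_one p hp m (by omega)]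
  rw [hm]
  rw [pow_succ, pow_mul]
  norm_num
end

section
/- Let p be an odd prime and 0 ≤ k ≤ (p-1)/2. Then, as elements of Z_p (p-adic integers), the quotient ((1-p)/2)_k * ((1+p)/2)_k / ((1+p/2)_k * (1-p/2)_k) is congruent modulo p^4 to ((1/2)_k / (1)_k)^2 * (1 + p^2 * sum_{j=1}^{k} (1/(2j)^2 - 1/(2j-1)^2)). -/
/-!
Pairing factors, `((1-p)/2+i)((1+p)/2+i) = (1/2+i)² (1 - p²/(2i+1)²)` and
`(1+p/2+i)(1-p/2+i) = (1+i)² (1 - p²/(2i+2)²)`, so the quotient is `((1/2)_k/(1)_k)²` times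
`∏ (1 - p²/(2i+1)²) / ∏ (1 - p²/(2i+2)²)`. For `k ≤ (p-1)/2` every `2i+1`, `2i+2` is a `p`-adic
unit, and in an ultrametric ring `∏ (1 - c xᵢ) ≡ 1 - c ∑ xᵢ` modulo `‖c‖²` whenever `‖c‖, ‖xᵢ‖ ≤ 1`;
with `c = p²` this is the congruence modulo `p⁴`.
-/

open Finset IsUltrametricDist

section Ultrametric

variable {R K ι : Type*}

lemma IsUltrametricDist.norm_sub_le_max [SeminormedAddGroup R] [IsUltrametricDist R] (x y : R) :
    ‖x - y‖ ≤ max ‖x‖ ‖y‖ := by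
  simpa [sub_eq_add_neg] using norm_add_le_max x (-y)

lemma IsUltrametricDist.norm_one_sub_eq_one [SeminormedRing R] [NormOneClass R]
    [IsUltrametricDist R] {z : R} (hz : ‖z‖ < 1) : ‖1 - z‖ = 1 := by
  rw [sub_eq_add_neg, norm_add_eq_max_of_norm_ne_norm] <;> simp [hz.le, hz.ne']

lemma norm_prod_one_sub_mul_sub_le [NormedCommRing R] [NormOneClass R] [IsUltrametricDist R]
    (s : Finset ι) {c : R} (hc : ‖c‖ ≤ 1) {x : ι → R} (hx : ∀ i ∈ s, ‖x i‖ ≤ 1) :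
    ‖∏ i ∈ s, (1 - c * x i) - (1 - c * ∑ i ∈ s, x i)‖ ≤ ‖c‖ ^ 2 := by
  classical
  induction s using Finset.induction_on with
  | empty => simp
  | insert a s ha ih =>
    have hxa : ‖x a‖ ≤ 1 := hx a (mem_insert_self a s)
    have hxs : ∀ i ∈ s, ‖x i‖ ≤ 1 := fun i hi => hx i (mem_insert_of_mem hi)
    have hS : ‖∑ i ∈ s, x i‖ ≤ 1 := norm_sum_le_of_forall_le_of_nonneg zero_le_one hxs
    have hfac : ‖1 - c * x a‖ ≤ 1 :=
      (norm_sub_le_max _ _).trans (max_le norm_one.le (by simpa using norm_mul_le_of_le hc hxa))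
    rw [prod_insert ha, sum_insert ha]
    calc ‖(1 - c * x a) * ∏ i ∈ s, (1 - c * x i) - (1 - c * (x a + ∑ i ∈ s, x i))‖
        = ‖(1 - c * x a) * (∏ i ∈ s, (1 - c * x i) - (1 - c * ∑ i ∈ s, x i))
          + c * (c * (x a * ∑ i ∈ s, x i))‖ := by ring_nf
      _ ≤ max (1 * ‖c‖ ^ 2) (‖c‖ * (‖c‖ * 1)) := by
        refine (norm_add_le_max _ _).trans (max_le_max ?_ ?_)
        · exact norm_mul_le_of_le hfac (ih hxs)
        · exact norm_mul_le_of_le le_rfl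
            (norm_mul_le_of_le le_rfl (by simpa using norm_mul_le_of_le hxa hS))
      _ = ‖c‖ ^ 2 := by ring_nf; exact max_self _

lemma norm_prod_div_prod_sub_le [NormedField K] [IsUltrametricDist K]
    (s : Finset ι) {c : K} (hc : ‖c‖ < 1) {x y : ι → K}
    (hx : ∀ i ∈ s, ‖x i‖ ≤ 1) (hy : ∀ i ∈ s, ‖y i‖ ≤ 1) :
    ‖(∏ i ∈ s, (1 - c * x i)) / (∏ i ∈ s, (1 - c * y i)) - (1 + c * ∑ i ∈ s, (y i - x i))‖
      ≤ ‖c‖ ^ 2 := by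
  set Sx := ∑ i ∈ s, x i
  set Sy := ∑ i ∈ s, y i
  set T := 1 + c * ∑ i ∈ s, (y i - x i)
  have hPy : ‖∏ i ∈ s, (1 - c * y i)‖ = 1 := by
    rw [norm_prod]
    refine prod_eq_one fun i hi => norm_one_sub_eq_one ?_
    rw [norm_mul]
    exact mul_lt_one_of_nonneg_of_lt_one_left (norm_nonneg c) hc (hy i hi)
  have hSx : ‖Sx‖ ≤ 1 := norm_sum_le_of_forall_le_of_nonneg zero_le_one hx
  have hSy : ‖Sy‖ ≤ 1 := norm_sum_le_of_forall_le_of_nonneg zero_le_one hy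
  have hT : ‖T‖ ≤ 1 := by
    have hS : ‖∑ i ∈ s, (y i - x i)‖ ≤ 1 := by
      rw [sum_sub_distrib]
      exact (norm_sub_le_max _ _).trans (max_le hSy hSx)
    exact (norm_add_le_max _ _).trans
      (max_le norm_one.le (by simpa using norm_mul_le_of_le hc.le hS))
  have hdecomp : (∏ i ∈ s, (1 - c * x i)) / (∏ i ∈ s, (1 - c * y i)) - T =
      ((∏ i ∈ s, (1 - c * x i) - (1 - c * Sx)) - T * (∏ i ∈ s, (1 - c * y i) - (1 - c * Sy))
        + c ^ 2 * ((Sy - Sx) * Sy)) / ∏ i ∈ s, (1 - c * y i) := by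
    have hPy0 : ∏ i ∈ s, (1 - c * y i) ≠ 0 := norm_ne_zero_iff.1 (by simp [hPy])
    simp only [T, sum_sub_distrib]
    field_simp
    ring
  rw [hdecomp, norm_div, hPy, div_one]
  refine (norm_add_le_max _ _).trans (max_le ((norm_sub_le_max _ _).trans (max_le ?_ ?_)) ?_)
  · exact norm_prod_one_sub_mul_sub_le s hc.le hx
  · rw [norm_mul]
    exact (mul_le_of_le_one_left (norm_nonneg _) hT).trans
      (norm_prod_one_sub_mul_sub_le s hc.le hy)
  · rw [norm_mul, norm_pow]
    refine mul_le_of_le_one_right (by positivity) ?_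
    rw [norm_mul]
    exact mul_le_one₀ ((norm_sub_le_max _ _).trans (max_le hSy hSx)) (norm_nonneg _) hSy

end Ultrametric

section Pochhammer

variable {K : Type*} [Field K] [CharZero K]

lemma poch_half_sub_mul_poch_half_add (t : K) (k : ℕ) :
    poch ((1 - t) / 2) k * poch ((1 + t) / 2) k =
      poch (1 / 2) k ^ 2 * ∏ i ∈ range k, (1 - t ^ 2 * ((2 * i + 1 : ℕ) : K)⁻¹ ^ 2) := by
  simp only [poch, ← prod_pow, ← prod_mul_distrib]
  refine prod_congr rfl fun i _ => ?_
  have h : (2 * i + 1 : K) ≠ 0 := by exact_mod_cast (2 * i).succ_ne_zero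
  push_cast
  field_simp
  ring

lemma poch_one_add_mul_poch_one_sub (t : K) (k : ℕ) :
    poch (1 + t / 2) k * poch (1 - t / 2) k =
      poch 1 k ^ 2 * ∏ i ∈ range k, (1 - t ^ 2 * ((2 * i + 2 : ℕ) : K)⁻¹ ^ 2) := by
  simp only [poch, ← prod_pow, ← prod_mul_distrib]
  refine prod_congr rfl fun i _ => ?_
  have h : (2 * i + 2 : K) ≠ 0 := by exact_mod_cast (2 * i + 1).succ_ne_zero
  push_cast
  field_simp
  ring

lemma poch_half_div_poch_one (k : ℕ) :
    poch (1 / 2 : K) k / poch 1 k =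
      ∏ i ∈ range k, ((2 * i + 1 : ℕ) : K) / ((2 * i + 2 : ℕ) : K) := by
  simp only [poch, ← prod_div_distrib]
  refine prod_congr rfl fun i _ => ?_
  have h : (1 + i : K) ≠ 0 := by rw [add_comm]; exact_mod_cast i.succ_ne_zero
  push_cast
  field_simp
  ring

end Pochhammer

lemma sum_Icc_one_div_sq_sub_one_div_sq {K : Type*} [Field K] (k : ℕ) :
    ∑ j ∈ Icc 1 k, ((1 : K) / (2 * j) ^ 2 - 1 / (2 * j - 1) ^ 2) =
      ∑ i ∈ range k, (((2 * i + 2 : ℕ) : K)⁻¹ ^ 2 - ((2 * i + 1 : ℕ) : K)⁻¹ ^ 2) := by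
  rw [← Ico_add_one_right_eq_Icc, sum_Ico_eq_sum_range, add_tsub_cancel_right]
  refine sum_congr rfl fun i _ => ?_
  simp only [one_div, ← inv_pow]
  push_cast
  ring

lemma Padic.norm_natCast_eq_one_of_pos_of_lt {p : ℕ} [Fact p.Prime] {n : ℕ} (h0 : 0 < n)
    (hn : n < p) : ‖(n : ℚ_[p])‖ = 1 :=
  Padic.norm_natCast_eq_one_iff.2 (Nat.coprime_of_lt_prime h0.ne' hn Fact.out)

theorem stmt9_general (p : ℕ) [hp : Fact p.Prime] (k : ℕ) (hk : k ≤ (p - 1) / 2) :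
    ‖poch (((1 : ℚ_[p]) - p) / 2) k * poch (((1 : ℚ_[p]) + p) / 2) k /
        (poch ((1 : ℚ_[p]) + p / 2) k * poch ((1 : ℚ_[p]) - p / 2) k) -
      (poch ((1 : ℚ_[p]) / 2) k / poch (1 : ℚ_[p]) k) ^ 2 *
        (1 + (p : ℚ_[p]) ^ 2 *
          ∑ j ∈ Finset.Icc 1 k, ((1 : ℚ_[p]) / (2 * j) ^ 2 - 1 / (2 * j - 1) ^ 2))‖ ≤
      (p : ℝ) ^ (-4 : ℤ) := by
  have hlt : ∀ i ∈ range k, 2 * i + 2 < p := fun i hi => by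
    have := mem_range.1 hi; have := hp.out.two_le; omega
  have hinv : ∀ n, 0 < n → n < p → ‖(n : ℚ_[p])⁻¹ ^ 2‖ ≤ 1 := fun n h0 hn => by
    rw [norm_pow, norm_inv, Padic.norm_natCast_eq_one_of_pos_of_lt h0 hn]; norm_num
  have hp2 : ‖(p : ℚ_[p]) ^ 2‖ = (p : ℝ)⁻¹ ^ 2 := by rw [norm_pow, Padic.norm_p]
  have hratio : ‖poch ((1 : ℚ_[p]) / 2) k / poch 1 k‖ ≤ 1 := by
    rw [poch_half_div_poch_one, norm_prod]
    refine prod_le_one (fun _ _ => norm_nonneg _) fun i hi => ?_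
    rw [norm_div, Padic.norm_natCast_eq_one_of_pos_of_lt (by omega) (hlt i hi), div_one]
    exact norm_natCast_le_one _ _
  have hc : ‖(p : ℚ_[p]) ^ 2‖ < 1 := by
    rw [hp2]
    exact pow_lt_one₀ (by positivity)
      (inv_lt_one_of_one_lt₀ (by exact_mod_cast hp.out.one_lt)) two_ne_zero
  rw [poch_half_sub_mul_poch_half_add, poch_one_add_mul_poch_one_sub,
    sum_Icc_one_div_sq_sub_one_div_sq, mul_div_mul_comm, ← div_pow, ← mul_sub, norm_mul, norm_pow]
  calc _ ≤ 1 ^ 2 * ‖(p : ℚ_[p]) ^ 2‖ ^ 2 := by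
        gcongr
        exact norm_prod_div_prod_sub_le _ hc
          (fun i hi => hinv _ (by omega) (by have := hlt i hi; omega))
          (fun i hi => hinv _ (by omega) (hlt i hi))
    _ = (p : ℝ) ^ (-4 : ℤ) := by rw [hp2]; norm_num; ring

theorem stmt9 (p : ℕ) [hp : Fact p.Prime] (hodd : Odd p) (k : ℕ) (hk : k ≤ (p - 1) / 2) :
    ‖poch (((1 : ℚ_[p]) - p) / 2) k * poch (((1 : ℚ_[p]) + p) / 2) k /
        (poch ((1 : ℚ_[p]) + p / 2) k * poch ((1 : ℚ_[p]) - p / 2) k) -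
      (poch ((1 : ℚ_[p]) / 2) k / poch (1 : ℚ_[p]) k) ^ 2 *
        (1 + (p : ℚ_[p]) ^ 2 *
          ∑ j ∈ Finset.Icc 1 k, ((1 : ℚ_[p]) / (2 * j) ^ 2 - 1 / (2 * j - 1) ^ 2))‖ ≤
      (p : ℝ) ^ (-4 : ℤ) :=
  stmt9_general p (hp := hp) k hk
end

section
/- Let p be an odd prime and 0 ≤ k ≤ (p-1)/2. Then, as elements of Z_p, the product ((1+p)/2)_k * ((1-p)/2)_k / ((1)_k)^2 is congruent modulo p^4 to ((1/2)_k / (1)_k)^2 * (1 - p^2 * sum_{j=1}^{k} 1/(2j-1)^2). -/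
lemma norm_nat_unit {p : ℕ} [Fact p.Prime] {n : ℕ} (h0 : 0 < n) (h : n < p) :
    ‖((n : ℚ_[p]))‖ = 1 := by
  have hle : ‖((n : ℤ) : ℚ_[p])‖ ≤ 1 := Padic.norm_int_le_one _
  have hnd : ¬ ((p : ℤ) ∣ (n : ℤ)) := by
    rw [Int.natCast_dvd_natCast]
    intro hd
    have := Nat.le_of_dvd h0 hd
    omega
  have hlt : ¬ ‖((n : ℤ) : ℚ_[p])‖ < 1 := by
    rw [Padic.norm_intCast_lt_one_iff]; exact hnd
  push_cast at hle hlt ⊢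
  linarith

lemma prod_one_sub_bound {p : ℕ} [Fact p.Prime] (c : ℝ) (hc0 : 0 ≤ c) (hc1 : c ≤ 1)
    (x : ℕ → ℚ_[p]) :
    ∀ n : ℕ, (∀ i < n, ‖x i‖ ≤ c) →
      ‖∏ i ∈ Finset.range n, (1 - x i) - (1 - ∑ i ∈ Finset.range n, x i)‖ ≤ c ^ 2 ∧
      ‖∏ i ∈ Finset.range n, (1 - x i) - 1‖ ≤ c := by
  intro n
  induction n with
  | zero =>
    intro _
    constructor <;> simp [hc0, sq_nonneg c]
  | succ n ih =>
    intro h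
    obtain ⟨h1, h2⟩ := ih (fun i hi => h i (by omega))
    set P := ∏ i ∈ Finset.range n, (1 - x i) with hP
    set S := ∑ i ∈ Finset.range n, x i with hS
    have hx : ‖x n‖ ≤ c := h n (by omega)
    rw [Finset.prod_range_succ, Finset.sum_range_succ]
    have hPle : ‖P‖ ≤ 1 := by
      have : P = (P - 1) + 1 := by ring
      rw [this]
      refine le_trans (Padic.nonarchimedean _ _) (max_le (le_trans h2 hc1) (by simp))
    constructor
    · have key : P * (1 - x n) - (1 - (S + x n)) = (P - (1 - S)) + (-(x n * (P - 1))) := by ring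
      rw [key]
      refine le_trans (Padic.nonarchimedean _ _) (max_le h1 ?_)
      rw [norm_neg, norm_mul]
      calc ‖x n‖ * ‖P - 1‖ ≤ c * c := mul_le_mul hx h2 (norm_nonneg _) hc0
        _ = c ^ 2 := (sq c).symm
    · have key : P * (1 - x n) - 1 = (P - 1) + (-(P * x n)) := by ring
      rw [key]
      refine le_trans (Padic.nonarchimedean _ _) (max_le h2 ?_)
      rw [norm_neg, norm_mul]
      calc ‖P‖ * ‖x n‖ ≤ 1 * c := mul_le_mul hPle hx (norm_nonneg _) (by norm_num)
        _ = c := one_mul c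

theorem stmt10 (p : ℕ) [hp : Fact p.Prime] (hodd : Odd p) (k : ℕ) (hk : k ≤ (p - 1) / 2) :
    ‖poch (((1 : ℚ_[p]) + p) / 2) k * poch (((1 : ℚ_[p]) - p) / 2) k /
        (poch (1 : ℚ_[p]) k) ^ 2 -
      (poch ((1 : ℚ_[p]) / 2) k / poch (1 : ℚ_[p]) k) ^ 2 *
        (1 - (p : ℚ_[p]) ^ 2 *
          ∑ j ∈ Finset.Icc 1 k, (1 : ℚ_[p]) / (2 * j - 1) ^ 2)‖ ≤
      (p : ℝ) ^ (-4 : ℤ) := by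
  have hp2 : 2 ≤ p := hp.out.two_le
  obtain ⟨m, hm⟩ := hodd
  have hp3 : 3 ≤ p := by
    rcases Nat.lt_or_ge p 3 with h | h
    · interval_cases p <;> omega
    · exact h
  -- the odd numbers 2i+1 for i < k are units
  have hsmall : ∀ i < k, 2 * i + 1 < p := by intro i hi; omega
  set u : ℕ → ℚ_[p] := fun i => 2 * (i : ℚ_[p]) + 1 with hu
  have hucast : ∀ i : ℕ, u i = ((2 * i + 1 : ℕ) : ℚ_[p]) := by
    intro i; simp only [hu]; push_cast; ring
  have hune : ∀ i < k, u i ≠ 0 := by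
    intro i hi
    rw [hucast]
    exact Nat.cast_ne_zero.mpr (by omega)
  have hunorm : ∀ i < k, ‖u i‖ = 1 := by
    intro i hi
    rw [hucast]
    exact norm_nat_unit (by omega) (hsmall i hi)
  set x : ℕ → ℚ_[p] := fun i => (p : ℚ_[p]) ^ 2 / (u i) ^ 2 with hx
  have hxnorm : ∀ i < k, ‖x i‖ = ((p : ℝ)⁻¹) ^ 2 := by
    intro i hi
    rw [hx]
    simp only [norm_div, norm_pow, Padic.norm_p, hunorm i hi, one_pow, div_one]
  set c : ℝ := ((p : ℝ)⁻¹) ^ 2 with hc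
  have hpR : (1 : ℝ) ≤ (p : ℝ) := by exact_mod_cast Nat.one_le_of_lt hp2
  have hc0 : 0 ≤ c := by positivity
  have hc1 : c ≤ 1 := by
    rw [hc]
    have : (p : ℝ)⁻¹ ≤ 1 := inv_le_one_of_one_le₀ hpR
    nlinarith [inv_nonneg.mpr (le_trans zero_le_one hpR)]
  -- D = poch 1 k is a nonzero unit
  set D : ℚ_[p] := poch (1 : ℚ_[p]) k with hD
  have hDfac : D = ∏ i ∈ Finset.range k, ((i + 1 : ℕ) : ℚ_[p]) := by
    rw [hD, poch]
    apply Finset.prod_congr rfl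
    intro i _
    push_cast; ring
  have hDnorm : ‖D‖ = 1 := by
    rw [hDfac, norm_prod]
    apply Finset.prod_eq_one
    intro i hi
    rw [Finset.mem_range] at hi
    exact norm_nat_unit (by omega) (by omega)
  have hDne : D ≠ 0 := by
    intro h
    rw [h, norm_zero] at hDnorm
    norm_num at hDnorm
  -- C = poch (1/2) k is a unit
  set C : ℚ_[p] := poch ((1 : ℚ_[p]) / 2) k with hC
  have h2norm : ‖(2 : ℚ_[p])‖ = 1 := by
    have := norm_nat_unit (p := p) (n := 2) (by norm_num) (by omega)
    simpa using this
  have hCnorm : ‖C‖ = 1 := by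
    rw [hC, poch, norm_prod]
    apply Finset.prod_eq_one
    intro i hi
    rw [Finset.mem_range] at hi
    have : (1 : ℚ_[p]) / 2 + i = u i / 2 := by rw [hu]; field_simp; ring
    rw [this, norm_div, hunorm i hi, h2norm]
    norm_num
  have hCne : C ≠ 0 := by
    intro h; rw [h, norm_zero] at hCnorm; norm_num at hCnorm
  -- product identity
  have hAB : poch (((1 : ℚ_[p]) + p) / 2) k * poch (((1 : ℚ_[p]) - p) / 2) k =
      C ^ 2 * ∏ i ∈ Finset.range k, (1 - x i) := by
    rw [hC, poch, poch, poch, ← Finset.prod_mul_distrib, ← Finset.prod_pow,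
      ← Finset.prod_mul_distrib]
    apply Finset.prod_congr rfl
    intro i hi
    rw [Finset.mem_range] at hi
    have hne := hune i hi
    rw [hx, hu] at *
    field_simp
    ring
  -- sum identity
  have hSum : (p : ℚ_[p]) ^ 2 * ∑ j ∈ Finset.Icc 1 k, (1 : ℚ_[p]) / (2 * j - 1) ^ 2 =
      ∑ i ∈ Finset.range k, x i := by
    rw [Finset.mul_sum, ← Finset.Ico_add_one_right_eq_Icc, Finset.sum_Ico_eq_sum_range]
    apply Finset.sum_congr (by norm_num)
    intro i _
    have h1 : 2 * (((1 + i : ℕ)) : ℚ_[p]) - 1 = u i := by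
      rw [hu]; push_cast; ring
    rw [h1, hx, mul_one_div]
  -- main rewrite
  set P := ∏ i ∈ Finset.range k, (1 - x i) with hPdef
  set S := ∑ i ∈ Finset.range k, x i with hSdef
  have key : poch (((1 : ℚ_[p]) + p) / 2) k * poch (((1 : ℚ_[p]) - p) / 2) k / D ^ 2 -
      (C / D) ^ 2 * (1 - (p : ℚ_[p]) ^ 2 *
        ∑ j ∈ Finset.Icc 1 k, (1 : ℚ_[p]) / (2 * j - 1) ^ 2) =
      (C / D) ^ 2 * (P - (1 - S)) := by
    rw [hAB, hSum]
    field_simp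
  rw [key, norm_mul, norm_pow, norm_div, hCnorm, hDnorm]
  have hb := (prod_one_sub_bound c hc0 hc1 x k (fun i hi => le_of_eq (hxnorm i hi))).1
  have hcsq : c ^ 2 = (p : ℝ) ^ (-4 : ℤ) := by
    rw [hc, ← pow_mul, inv_pow, zpow_neg, ← zpow_natCast (p : ℝ)]
    norm_num
  calc (1 / 1 : ℝ) ^ 2 * ‖P - (1 - S)‖ = ‖P - (1 - S)‖ := by norm_num
    _ ≤ c ^ 2 := hb
    _ = (p : ℝ) ^ (-4 : ℤ) := hcsq
end
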